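/- Let ω : ℝ → ℝ be an antitone (nonincreasing) function that is bounded below. Then for every N > 0 there exists R ≥ N such that ω is differentiable at R and its derivative satisfies −2/R ≤ ω'(R) ≤ 0. In particular, there exists a sequence R_j → ∞ such that ω is differentiable at each R_j with 0 ≥ ω'(R_j) ≥ −2/R_j. -/

import Mathlib

/-!
If `ω' < -κ/R` at almost every `R ≥ N`, then, since `∫_c^{2c} ω' ≥ ω(2c) - ω(c)` for a monotone
function, `ω` drops by at least `κ/2` across every dyadic interval `[c, 2c]` with `c ≥ N`, so it
tends to `-∞` along `2^k N`, contradicting boundedness below.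
-/

open Filter MeasureTheory Set

theorem MonotoneOn.mul_sub_le_sub_of_ae_le_deriv {f : ℝ → ℝ} {a b c : ℝ}
    (hf : MonotoneOn f (Icc a b)) (hab : a ≤ b)
    (hc : ∀ᵐ x, x ∈ Ioc a b → c ≤ deriv f x) :
    c * (b - a) ≤ f b - f a := by
  rw [← uIcc_of_le hab] at hf
  have hfab : f a ≤ f b := hf left_mem_uIcc right_mem_uIcc hab
  have hint := hf.intervalIntegral_deriv_mem_uIcc
  rw [uIcc_of_le (sub_nonneg.2 hfab)] at hint
  calc c * (b - a) = ∫ _ in a..b, c := by simp [mul_comm]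
    _ ≤ ∫ x in a..b, deriv f x := by
      simpa only [intervalIntegral.integral_of_le hab] using
        setIntegral_mono_ae_restrict (integrableOn_const measure_Ioc_lt_top.ne)
          hf.intervalIntegrable_deriv.1 ((ae_restrict_iff' measurableSet_Ioc).2 hc)
    _ ≤ f b - f a := hint.2

theorem Monotone.not_bddAbove_of_ae_div_le_deriv {f : ℝ → ℝ} (hf : Monotone f) {N κ : ℝ}
    (hN : 0 < N) (hκ : 0 < κ) (h : ∀ᵐ x, N ≤ x → κ / x ≤ deriv f x) :
    ¬ BddAbove (range f) := by
  have doubling : ∀ c, N ≤ c → f c + κ / 2 ≤ f (2 * c) := by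
    intro c hc
    have hc0 : 0 < c := hN.trans_le hc
    have hbound : ∀ᵐ x, x ∈ Ioc c (2 * c) → κ / (2 * c) ≤ deriv f x := by
      filter_upwards [h] with x hx hxc
      exact (div_le_div_of_nonneg_left hκ.le (hc0.trans hxc.1) hxc.2).trans
        (hx (hc.trans hxc.1.le))
    have := (hf.monotoneOn _).mul_sub_le_sub_of_ae_le_deriv (by linarith) hbound
    field_simp at this
    linarith
  have iterate : ∀ k : ℕ, f N + k * (κ / 2) ≤ f (2 ^ k * N) := by
    intro k
    induction k with
    | zero => simp
    | succ k ih =>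
      have hk := doubling (2 ^ k * N) (le_mul_of_one_le_left hN.le (one_le_pow₀ one_le_two))
      rw [← mul_assoc, ← pow_succ'] at hk
      push_cast
      linarith
  rintro ⟨M, hM⟩
  obtain ⟨k, hk⟩ := exists_nat_gt ((M - f N) / (κ / 2))
  rw [div_lt_iff₀ (half_pos hκ)] at hk
  linarith [iterate k, hM (mem_range_self (2 ^ k * N))]

theorem Antitone.exists_ge_differentiableAt_neg_div_le_deriv {ω : ℝ → ℝ} (hω : Antitone ω)
    (hbdd : BddBelow (range ω)) {N κ : ℝ} (hN : 0 < N) (hκ : 0 < κ) :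
    ∃ R, N ≤ R ∧ DifferentiableAt ℝ ω R ∧ -κ / R ≤ deriv ω R := by
  by_contra! h
  have hneg : Monotone (-ω) := hω.neg
  refine hneg.not_bddAbove_of_ae_div_le_deriv hN hκ ?_
    (by rw [← neg_range']; exact bddAbove_neg.2 hbdd)
  filter_upwards [hneg.ae_differentiableAt] with x hx hNx
  have hlt := h x hNx (by simpa using hx.neg)
  rw [deriv.neg]
  linarith [neg_div x κ]

/-- Strüwe's monotonicity trick: a nonincreasing function `ω : ℝ → ℝ` bounded below
admits, beyond every `N > 0`, a point `R ≥ N` of differentiability with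
`-2/R ≤ ω'(R) ≤ 0`; in particular there is a sequence `R_j → ∞` of such points. -/
theorem struwe_monotonicity_trick (ω : ℝ → ℝ) (hmono : Antitone ω)
    (hbdd : BddBelow (Set.range ω)) :
    (∀ N : ℝ, 0 < N → ∃ R : ℝ, N ≤ R ∧ DifferentiableAt ℝ ω R ∧
      -2 / R ≤ deriv ω R ∧ deriv ω R ≤ 0) ∧
    (∃ R : ℕ → ℝ, Tendsto R atTop atTop ∧ ∀ j : ℕ, DifferentiableAt ℝ ω (R j) ∧
      -2 / R j ≤ deriv ω (R j) ∧ deriv ω (R j) ≤ 0) := by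
  have beyond : ∀ N : ℝ, 0 < N → ∃ R : ℝ, N ≤ R ∧ DifferentiableAt ℝ ω R ∧
      -2 / R ≤ deriv ω R ∧ deriv ω R ≤ 0 := fun N hN => by
    obtain ⟨R, hNR, hdiff, hderiv⟩ :=
      hmono.exists_ge_differentiableAt_neg_div_le_deriv hbdd hN two_pos
    exact ⟨R, hNR, hdiff, hderiv, hmono.deriv_nonpos⟩
  refine ⟨beyond, ?_⟩
  choose R hR hdiff hlower hupper using fun j : ℕ => beyond (j + 1) j.cast_add_one_pos
  exact ⟨R, tendsto_atTop_mono hR (tendsto_natCast_atTop_atTop.atTop_add tendsto_const_nhds),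
    fun j => ⟨hdiff j, hlower j, hupper j⟩⟩
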